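/- Let μ > 0, λ > −2μ, ω > 0, k_p² = ω²/(λ+2μ), k_s² = ω²/μ. Let φ_p, φ_s : ℝ² → ℂ be twice continuously differentiable solutions of Δφ_p + k_p²φ_p = 0 and Δφ_s + k_s²φ_s = 0 on ℝ², let u = ∇φ_p + curl⃗ φ_s, let n = (n₁,n₂) ∈ ℝ² be a unit vector and t = (−n₂,n₁). Then the tangential component of the traction satisfies (σ(u)n)·t = 2μ tᵀ(Hφ_p)n − 2μ nᵀ(Hφ_s)n − μ k_s² φ_s at every point of ℝ². -/

import Mathlib

noncomputable section

open Real

/-- Partial derivative in the first coordinate direction. -/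
def pd1 (f : ℝ × ℝ → ℂ) (x : ℝ × ℝ) : ℂ := fderiv ℝ f x (1, 0)
/-- Partial derivative in the second coordinate direction. -/
def pd2 (f : ℝ × ℝ → ℂ) (x : ℝ × ℝ) : ℂ := fderiv ℝ f x (0, 1)
/-- Laplacian of a scalar field on ℝ². -/
def lap (f : ℝ × ℝ → ℂ) (x : ℝ × ℝ) : ℂ := pd1 (pd1 f) x + pd2 (pd2 f) x
/-- Divergence of the vector field (u1, u2). -/
def divU (u1 u2 : ℝ × ℝ → ℂ) (x : ℝ × ℝ) : ℂ := pd1 u1 x + pd2 u2 x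
/-- Scalar curl of the vector field (u1, u2). -/
def curlU (u1 u2 : ℝ × ℝ → ℂ) (x : ℝ × ℝ) : ℂ := pd1 u2 x - pd2 u1 x

/-- (1,1)-entry of the stress tensor σ(u) = 2μ ε(u) + λ (div u) I₂. -/
def sig11 (μ lam : ℝ) (u1 u2 : ℝ × ℝ → ℂ) (x : ℝ × ℝ) : ℂ :=
  2 * (μ : ℂ) * pd1 u1 x + (lam : ℂ) * divU u1 u2 x
/-- (1,2)-entry (= (2,1)-entry) of the stress tensor. -/
def sig12 (μ : ℝ) (u1 u2 : ℝ × ℝ → ℂ) (x : ℝ × ℝ) : ℂ :=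
  (μ : ℂ) * (pd1 u2 x + pd2 u1 x)
/-- (2,2)-entry of the stress tensor. -/
def sig22 (μ lam : ℝ) (u1 u2 : ℝ × ℝ → ℂ) (x : ℝ × ℝ) : ℂ :=
  2 * (μ : ℂ) * pd2 u2 x + (lam : ℂ) * divU u1 u2 x

/-- First component of u = ∇φ_p + curl⃗ φ_s. -/
def uHD1 (φp φs : ℝ × ℝ → ℂ) (x : ℝ × ℝ) : ℂ := pd1 φp x + pd2 φs x
/-- Second component of u = ∇φ_p + curl⃗ φ_s. -/
def uHD2 (φp φs : ℝ × ℝ → ℂ) (x : ℝ × ℝ) : ℂ := pd2 φp x - pd1 φs x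

/-- Quadratic form vᵀ (Hφ) w of the Hessian of φ at x, for v, w ∈ ℝ². -/
def hq (φ : ℝ × ℝ → ℂ) (v w : ℝ × ℝ) (x : ℝ × ℝ) : ℂ :=
  ((v.1 * w.1 : ℝ) : ℂ) * pd1 (pd1 φ) x + ((v.1 * w.2 : ℝ) : ℂ) * pd1 (pd2 φ) x
  + ((v.2 * w.1 : ℝ) : ℂ) * pd2 (pd1 φ) x + ((v.2 * w.2 : ℝ) : ℂ) * pd2 (pd2 φ) x

/-!
Since `t ⊥ n`, the term `λ (div u) I₂` of the stress contributes nothing to `(σ(u)n)·t`, which is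
therefore `μ` times a combination of first derivatives of `u` depending only on `n`. For
`u = ∇φ_p + curl⃗ φ_s` these are second derivatives of the potentials; by symmetry of the Hessians
the `φ_s` part becomes `μ (tᵀ(Hφ_s)t − nᵀ(Hφ_s)n)`, and since `n, t` is an orthonormal basis,
`tᵀ(Hφ_s)t + nᵀ(Hφ_s)n = Δφ_s = −k_s² φ_s`.
-/

section SecondDerivatives

variable {𝕜 E F : Type*} [NontriviallyNormedField 𝕜] [NormedAddCommGroup E] [NormedSpace 𝕜 E]
  [NormedAddCommGroup F] [NormedSpace 𝕜 F] {f : E → F} {x : E}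

theorem hasFDerivAt_fderiv_apply (hf : DifferentiableAt 𝕜 (fderiv 𝕜 f) x) (v : E) :
    HasFDerivAt (fun y => fderiv 𝕜 f y v) ((fderiv 𝕜 (fderiv 𝕜 f) x).flip v) x :=
  (ContinuousLinearMap.apply 𝕜 F v).hasFDerivAt.comp x hf.hasFDerivAt

theorem fderiv_fderiv_apply (hf : DifferentiableAt 𝕜 (fderiv 𝕜 f) x) (v w : E) :
    fderiv 𝕜 (fun y => fderiv 𝕜 f y v) x w = fderiv 𝕜 (fderiv 𝕜 f) x w v := by
  rw [(hasFDerivAt_fderiv_apply hf v).fderiv]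
  rfl

theorem ContDiff.differentiable_fderiv (hf : ContDiff 𝕜 2 f) : Differentiable 𝕜 (fderiv 𝕜 f) :=
  (hf.fderiv_right (m := 1) le_rfl).differentiable one_ne_zero

end SecondDerivatives

section PartialDerivatives

variable {f g φ : ℝ × ℝ → ℂ} {x : ℝ × ℝ}

theorem pd1_add (hf : DifferentiableAt ℝ f x) (hg : DifferentiableAt ℝ g x) :
    pd1 (fun y => f y + g y) x = pd1 f x + pd1 g x := by
  simp only [pd1, fderiv_fun_add hf hg, add_apply]

theorem pd2_add (hf : DifferentiableAt ℝ f x) (hg : DifferentiableAt ℝ g x) :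
    pd2 (fun y => f y + g y) x = pd2 f x + pd2 g x := by
  simp only [pd2, fderiv_fun_add hf hg, add_apply]

theorem pd1_sub (hf : DifferentiableAt ℝ f x) (hg : DifferentiableAt ℝ g x) :
    pd1 (fun y => f y - g y) x = pd1 f x - pd1 g x := by
  simp only [pd1, fderiv_fun_sub hf hg, sub_apply]

theorem pd2_sub (hf : DifferentiableAt ℝ f x) (hg : DifferentiableAt ℝ g x) :
    pd2 (fun y => f y - g y) x = pd2 f x - pd2 g x := by
  simp only [pd2, fderiv_fun_sub hf hg, sub_apply]

theorem ContDiff.differentiable_pd1 (hφ : ContDiff ℝ 2 φ) : Differentiable ℝ (pd1 φ) :=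
  fun x => (hasFDerivAt_fderiv_apply (hφ.differentiable_fderiv x) _).differentiableAt

theorem ContDiff.differentiable_pd2 (hφ : ContDiff ℝ 2 φ) : Differentiable ℝ (pd2 φ) :=
  fun x => (hasFDerivAt_fderiv_apply (hφ.differentiable_fderiv x) _).differentiableAt

theorem ContDiff.pd1_pd2_comm (hφ : ContDiff ℝ 2 φ) (x : ℝ × ℝ) :
    pd1 (pd2 φ) x = pd2 (pd1 φ) x := by
  change fderiv ℝ (fun y => fderiv ℝ φ y (0, 1)) x (1, 0)
    = fderiv ℝ (fun y => fderiv ℝ φ y (1, 0)) x (0, 1)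
  have hd := hφ.differentiable_fderiv x
  rw [fderiv_fderiv_apply hd, fderiv_fderiv_apply hd]
  exact (hφ.contDiffAt.isSymmSndFDerivAt (by simp)).eq (1, 0) (0, 1)

end PartialDerivatives

theorem tangential_traction_eq (μ lam : ℝ) (u1 u2 : ℝ × ℝ → ℂ) (n : ℝ × ℝ) (x : ℝ × ℝ) :
    (sig11 μ lam u1 u2 x * (n.1 : ℂ) + sig12 μ u1 u2 x * (n.2 : ℂ)) * ((-n.2 : ℝ) : ℂ)
        + (sig12 μ u1 u2 x * (n.1 : ℂ) + sig22 μ lam u1 u2 x * (n.2 : ℂ)) * (n.1 : ℂ)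
      = (μ : ℂ) * (2 * n.1 * n.2 * (pd2 u2 x - pd1 u1 x)
          + (n.1 ^ 2 - n.2 ^ 2) * (pd1 u2 x + pd2 u1 x)) := by
  simp only [sig11, sig12, sig22, divU]
  push_cast
  ring

section HelmholtzDecomposition

variable {φp φs : ℝ × ℝ → ℂ}

theorem pd1_uHD1 (hφp : ContDiff ℝ 2 φp) (hφs : ContDiff ℝ 2 φs) (x : ℝ × ℝ) :
    pd1 (uHD1 φp φs) x = pd1 (pd1 φp) x + pd1 (pd2 φs) x :=
  pd1_add (hφp.differentiable_pd1 x) (hφs.differentiable_pd2 x)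

theorem pd2_uHD1 (hφp : ContDiff ℝ 2 φp) (hφs : ContDiff ℝ 2 φs) (x : ℝ × ℝ) :
    pd2 (uHD1 φp φs) x = pd2 (pd1 φp) x + pd2 (pd2 φs) x :=
  pd2_add (hφp.differentiable_pd1 x) (hφs.differentiable_pd2 x)

theorem pd1_uHD2 (hφp : ContDiff ℝ 2 φp) (hφs : ContDiff ℝ 2 φs) (x : ℝ × ℝ) :
    pd1 (uHD2 φp φs) x = pd1 (pd2 φp) x - pd1 (pd1 φs) x :=
  pd1_sub (hφp.differentiable_pd2 x) (hφs.differentiable_pd1 x)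

theorem pd2_uHD2 (hφp : ContDiff ℝ 2 φp) (hφs : ContDiff ℝ 2 φs) (x : ℝ × ℝ) :
    pd2 (uHD2 φp φs) x = pd2 (pd2 φp) x - pd2 (pd1 φs) x :=
  pd2_sub (hφp.differentiable_pd2 x) (hφs.differentiable_pd1 x)

end HelmholtzDecomposition

theorem stmt11_general (μ lam : ℝ) (ks2 : ℝ)
    (φp φs : ℝ × ℝ → ℂ) (hφp : ContDiff ℝ 2 φp) (hφs : ContDiff ℝ 2 φs)
    (hHs : ∀ x, lap φs x + (ks2 : ℂ) * φs x = 0)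
    (n : ℝ × ℝ) (hn : n.1 ^ 2 + n.2 ^ 2 = 1) :
    ∀ x,
      (sig11 μ lam (uHD1 φp φs) (uHD2 φp φs) x * (n.1 : ℂ)
          + sig12 μ (uHD1 φp φs) (uHD2 φp φs) x * (n.2 : ℂ)) * ((-n.2 : ℝ) : ℂ)
        + (sig12 μ (uHD1 φp φs) (uHD2 φp φs) x * (n.1 : ℂ)
          + sig22 μ lam (uHD1 φp φs) (uHD2 φp φs) x * (n.2 : ℂ)) * (n.1 : ℂ)
      = 2 * (μ : ℂ) * hq φp (-n.2, n.1) n x - 2 * (μ : ℂ) * hq φs n n x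
        - (μ : ℂ) * (ks2 : ℂ) * φs x := by
  intro x
  have hunit : (n.1 : ℂ) ^ 2 + (n.2 : ℂ) ^ 2 = 1 := by exact_mod_cast hn
  have hHelmholtz := hHs x
  rw [lap] at hHelmholtz
  rw [tangential_traction_eq, pd1_uHD1 hφp hφs, pd2_uHD1 hφp hφs, pd1_uHD2 hφp hφs,
    pd2_uHD2 hφp hφs]
  simp only [hq, hφp.pd1_pd2_comm x, hφs.pd1_pd2_comm x]
  push_cast
  linear_combination (μ : ℂ) * (pd1 (pd1 φs) x + pd2 (pd2 φs) x) * hunit + (μ : ℂ) * hHelmholtz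

/-- For C² Helmholtz solutions φ_p, φ_s with wave numbers k_p, k_s and
u = ∇φ_p + curl⃗ φ_s, the tangential traction component satisfies
(σ(u)n)·t = 2μ tᵀ(Hφ_p)n − 2μ nᵀ(Hφ_s)n − μ k_s² φ_s. -/
theorem stmt11 (μ lam ω : ℝ) (hμ : 0 < μ) (hlam : -(2 * μ) < lam) (hω : 0 < ω)
    (kp2 ks2 : ℝ) (hkp : kp2 = ω ^ 2 / (lam + 2 * μ)) (hks : ks2 = ω ^ 2 / μ)
    (φp φs : ℝ × ℝ → ℂ) (hφp : ContDiff ℝ 2 φp) (hφs : ContDiff ℝ 2 φs)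
    (hHp : ∀ x, lap φp x + (kp2 : ℂ) * φp x = 0)
    (hHs : ∀ x, lap φs x + (ks2 : ℂ) * φs x = 0)
    (n : ℝ × ℝ) (hn : n.1 ^ 2 + n.2 ^ 2 = 1) :
    ∀ x,
      (sig11 μ lam (uHD1 φp φs) (uHD2 φp φs) x * (n.1 : ℂ)
          + sig12 μ (uHD1 φp φs) (uHD2 φp φs) x * (n.2 : ℂ)) * ((-n.2 : ℝ) : ℂ)
        + (sig12 μ (uHD1 φp φs) (uHD2 φp φs) x * (n.1 : ℂ)
          + sig22 μ lam (uHD1 φp φs) (uHD2 φp φs) x * (n.2 : ℂ)) * (n.1 : ℂ)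
      = 2 * (μ : ℂ) * hq φp (-n.2, n.1) n x - 2 * (μ : ℂ) * hq φs n n x
        - (μ : ℂ) * (ks2 : ℂ) * φs x :=
  stmt11_general μ lam ks2 φp φs hφp hφs hHs n hn
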